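/- arXiv:2010.10153 — 2 statements merged into one kernel-verified Lean document; each statement's English description precedes it below -/
import Mathlib

section
/- Let l be a prime and let A(1,l), A(1,l^2), A(1,l^3), A(l,1) be complex numbers satisfying the Hecke relation A(1,l)·A(1,l^2) = A(1,l^3) + A(1,l)·A(l,1) − 1, together with A(l,1) = conj(A(1,l)) (dual form). Then max{|A(1,l)|, |A(1,l^2)|, |A(1,l^3)|} ≥ 1/3. -/
/-! Rewriting the Hecke relation as `1 = A(1,l³) + |A(1,l)|² - A(1,l) A(1,l²)` and taking norms
gives `1 ≤ m + 2m²` for the maximum `m` of the three absolute values, which forces `m ≥ 1/2`. -/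

theorem one_le_norm_add_mul_add_norm {R : Type*} [SeminormedRing R] [NormOneClass R]
    {x a b c : R} (h : x + a * b - a * c = 1) : 1 ≤ ‖x‖ + ‖a‖ * (‖b‖ + ‖c‖) :=
  calc (1 : ℝ) = ‖x + a * b - a * c‖ := by rw [h, norm_one]
    _ ≤ ‖x‖ + ‖a * b‖ + ‖a * c‖ := norm_sub_le_of_le (norm_add_le _ _) le_rfl
    _ ≤ ‖x‖ + ‖a‖ * ‖b‖ + ‖a‖ * ‖c‖ := by gcongr <;> exact norm_mul_le _ _
    _ = ‖x‖ + ‖a‖ * (‖b‖ + ‖c‖) := by ring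

theorem half_le_max_of_one_le_add_mul_add {x y z : ℝ} (hx : 0 ≤ x) (h : 1 ≤ z + x * (x + y)) :
    1 / 2 ≤ max (max x y) z := by
  set m := max (max x y) z
  have hxm : x ≤ m := le_trans (le_max_left _ _) (le_max_left _ _)
  have hym : y ≤ m := le_trans (le_max_right _ _) (le_max_left _ _)
  have hzm : z ≤ m := le_max_right _ _
  have hquad : 1 ≤ m + 2 * m ^ 2 := by nlinarith
  nlinarith

/-- Hecke relation at a prime forces one of the first three eigenvalues to be ≥ 1/3
in absolute value. -/
theorem hecke_max_lower_bound (A1 A2 A3 Al : ℂ)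
    (hrel : A1 * A2 = A3 + A1 * Al - 1)
    (hdual : Al = starRingEnd ℂ A1) :
    (1 : ℝ) / 3 ≤ max (max ‖A1‖ ‖A2‖) ‖A3‖ := by
  have hbound := one_le_norm_add_mul_add_norm (x := A3) (a := A1) (b := Al) (c := A2)
    (by linear_combination -hrel)
  rw [hdual, Complex.norm_conj] at hbound
  linarith [half_le_max_of_one_le_add_mul_add (norm_nonneg A1) hbound]
end

section
/- (Faà di Bruno's formula) Let f, g : R → R be smooth functions. Then for every n ≥ 1, the n-th derivative of the composition f∘g at x equals the sum over all n-tuples of non-negative integers (m₁,…,m_n) with 1·m₁ + 2·m₂ + ⋯ + n·m_n = n of n!/(m₁!·(1!)^{m₁}·m₂!·(2!)^{m₂}·⋯·m_n!·(n!)^{m_n}) · f^{(m₁+⋯+m_n)}(g(x)) · ∏_{j=1}^n (g^{(j)}(x))^{m_j}. -/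
open Finset

namespace FaaAux

variable {n : ℕ}

/-- Number of parts of size `k` in an ordered finpartition. -/
def mult (c : OrderedFinpartition n) (k : ℕ) : ℕ :=
  (Finset.univ.filter (fun i => c.partSize i = k)).card

lemma sum_partSize (c : OrderedFinpartition n) : ∑ i, c.partSize i = n := by
  classical
  have := Fintype.card_congr c.equivSigma
  simpa [Fintype.card_sigma] using this

lemma mult_zero (c : OrderedFinpartition n) : mult c 0 = 0 := by
  classical
  simp only [mult, Finset.card_eq_zero, Finset.filter_eq_empty_iff]
  intro i _
  exact (c.partSize_pos i).ne'

lemma mult_of_gt (c : OrderedFinpartition n) {k : ℕ} (hk : n < k) : mult c k = 0 := by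
  classical
  simp only [mult, Finset.card_eq_zero, Finset.filter_eq_empty_iff]
  intro i _
  exact fun h => absurd (h ▸ c.partSize_le i) (by omega)

lemma mult_le (c : OrderedFinpartition n) (k : ℕ) : mult c k ≤ n :=
  le_trans (le_trans (Finset.card_filter_le _ _) (by simp)) c.length_le

lemma sum_mult (c : OrderedFinpartition n) : ∑ k ∈ range (n + 1), mult c k = c.length := by
  classical
  rw [show c.length = Fintype.card (Fin c.length) by simp, ← Finset.card_univ]
  exact (Finset.card_eq_sum_card_fiberwise (f := c.partSize) (t := range (n+1))
    (fun i _ => by simp [Nat.lt_succ_iff, c.partSize_le i])).symm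

lemma sum_k_mult (c : OrderedFinpartition n) :
    ∑ k ∈ range (n + 1), k * mult c k = n := by
  classical
  have h := Finset.sum_fiberwise_of_maps_to (s := Finset.univ) (g := c.partSize)
    (t := range (n+1))
    (fun i _ => by simp [Nat.lt_succ_iff, c.partSize_le i]) (f := c.partSize)
  rw [sum_partSize] at h
  calc ∑ k ∈ range (n + 1), k * mult c k
      = ∑ k ∈ range (n + 1), ∑ i ∈ filter (fun i => c.partSize i = k) univ, c.partSize i := by
        refine Finset.sum_congr rfl fun k _ => ?_
        rw [Finset.sum_congr rfl (fun i hi => (Finset.mem_filter.1 hi).2),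
          Finset.sum_const, smul_eq_mul, mult, mul_comm]
    _ = n := h


lemma mult_extendLeft (c : OrderedFinpartition n) (k : ℕ) :
    mult c.extendLeft k = mult c k + (if 1 = k then 1 else 0) := by
  classical
  simp only [mult, Finset.card_filter]
  show (∑ i : Fin (c.length + 1),
      if (Fin.cons 1 c.partSize : Fin (c.length + 1) → ℕ) i = k then 1 else 0) = _
  rw [Fin.sum_univ_succ]
  simp only [Fin.cons_zero, Fin.cons_succ]
  rw [add_comm]

lemma mult_extendMiddle_add (c : OrderedFinpartition n) (i : Fin c.length) (k : ℕ) :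
    mult (c.extendMiddle i) k + (if c.partSize i = k then 1 else 0)
      = mult c k + (if c.partSize i + 1 = k then 1 else 0) := by
  classical
  simp only [mult, Finset.card_filter]
  have h1 : (∑ j : Fin (c.extendMiddle i).length,
        if (c.extendMiddle i).partSize j = k then 1 else 0)
      = (if c.partSize i + 1 = k then 1 else 0)
        + ∑ j ∈ Finset.univ.erase i, (if c.partSize j = k then 1 else 0) := by
    show (∑ j : Fin c.length,
      if Function.update c.partSize i (c.partSize i + 1) j = k then 1 else 0) = _
    rw [← Finset.add_sum_erase _ _ (Finset.mem_univ i)]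
    congr 1
    · simp
    · refine Finset.sum_congr rfl fun j hj => ?_
      have : j ≠ i := (Finset.mem_erase.1 hj).1
      simp [Function.update_of_ne this]
  have h2 : ∑ j : Fin c.length, (if c.partSize j = k then 1 else 0)
      = (if c.partSize i = k then 1 else 0)
        + ∑ j ∈ Finset.univ.erase i, (if c.partSize j = k then 1 else 0) :=
    (Finset.add_sum_erase _ _ (Finset.mem_univ i)).symm
  omega


/-- The compatibility conditions for a multiplicity function of an ordered finpartition. -/
def OK (n : ℕ) (m : ℕ → ℕ) : Prop :=
  m 0 = 0 ∧ (∀ k, n < k → m k = 0) ∧ ∑ k ∈ range (n + 1), k * m k = n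

open Classical in
/-- Number of ordered finpartitions with multiplicity function `m`. -/
noncomputable def N (n : ℕ) (m : ℕ → ℕ) : ℕ :=
  (Finset.univ.filter (fun c : OrderedFinpartition n => mult c = m)).card

/-- The denominator in Faà di Bruno's formula. -/
def D (B : ℕ) (m : ℕ → ℕ) : ℕ :=
  ∏ k ∈ range B, (m k).factorial * (k.factorial) ^ (m k)

lemma D_pos (B : ℕ) (m : ℕ → ℕ) : 0 < D B m :=
  Finset.prod_pos fun k _ => Nat.mul_pos (Nat.factorial_pos _) (Nat.pow_pos (Nat.factorial_pos _))

lemma D_stab {B B' : ℕ} {m : ℕ → ℕ} (h : ∀ k, B ≤ k → m k = 0) (hB : B ≤ B') :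
    D B' m = D B m := by
  refine (Finset.prod_subset (by simpa using hB) fun k _ hk => ?_).symm
  have : m k = 0 := h k (by simpa using hk)
  simp [this]

lemma ok_mult (c : OrderedFinpartition n) : OK n (mult c) :=
  ⟨mult_zero c, fun _ h => mult_of_gt c h, sum_k_mult c⟩

lemma N_eq_zero {m : ℕ → ℕ} (h : ¬ OK n m) : N n m = 0 := by
  classical
  rw [N, Finset.card_eq_zero, Finset.filter_eq_empty_iff]
  intro c _ hc
  exact h (hc ▸ ok_mult c)

/-- `m` with one part of size 1 removed. -/
def dec1 (m : ℕ → ℕ) : ℕ → ℕ := Function.update m 1 (m 1 - 1)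

/-- `m` with a part of size `s+1` replaced by a part of size `s`. -/
def swap (s : ℕ) (m : ℕ → ℕ) : ℕ → ℕ :=
  Function.update (Function.update m (s + 1) (m (s + 1) - 1)) s (m s + 1)

lemma swap_self (s : ℕ) (m : ℕ → ℕ) : swap s m s = m s + 1 := by simp [swap]

lemma swap_succ (s : ℕ) (m : ℕ → ℕ) : swap s m (s + 1) = m (s + 1) - 1 := by
  simp [swap, Function.update_of_ne (Nat.succ_ne_self s)]

lemma swap_other (s : ℕ) (m : ℕ → ℕ) {k : ℕ} (h1 : k ≠ s) (h2 : k ≠ s + 1) :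
    swap s m k = m k := by
  simp [swap, Function.update_of_ne h1, Function.update_of_ne h2]

lemma mult_extendLeft_iff (c : OrderedFinpartition n) (m : ℕ → ℕ) :
    mult c.extendLeft = m ↔ (1 ≤ m 1 ∧ mult c = dec1 m) := by
  constructor
  · rintro rfl
    have h1 := mult_extendLeft c 1
    rw [if_pos rfl] at h1
    refine ⟨by omega, funext fun k => ?_⟩
    rcases eq_or_ne k 1 with rfl | hne
    · simp only [dec1, Function.update_self]; omega
    · have hk := mult_extendLeft c k
      rw [if_neg (Ne.symm hne)] at hk
      simp only [dec1, Function.update_of_ne hne]; omega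
  · rintro ⟨h1, h2⟩
    funext k
    have hk := mult_extendLeft c k
    rw [h2] at hk
    rcases eq_or_ne k 1 with rfl | hne
    · rw [if_pos rfl] at hk
      simp only [dec1, Function.update_self] at hk; omega
    · rw [if_neg (Ne.symm hne)] at hk
      simp only [dec1, Function.update_of_ne hne] at hk; omega

lemma mult_extendMiddle_iff (c : OrderedFinpartition n) (i : Fin c.length) (m : ℕ → ℕ) :
    mult (c.extendMiddle i) = m ↔ (1 ≤ m (c.partSize i + 1) ∧ mult c = swap (c.partSize i) m) := by
  set s := c.partSize i with hs
  have hss : (s : ℕ) ≠ s + 1 := by omega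
  have hms : 1 ≤ mult c s := by
    classical
    rw [mult]
    refine Finset.card_pos.2 ⟨i, ?_⟩
    simp [hs]
  constructor
  · rintro rfl
    have hsucc := mult_extendMiddle_add c i (s + 1)
    have hself := mult_extendMiddle_add c i s
    rw [← hs, if_neg hss, if_pos rfl] at hsucc
    rw [← hs, if_pos rfl, if_neg (Ne.symm hss)] at hself
    refine ⟨by omega, funext fun k => ?_⟩
    rcases eq_or_ne k s with rfl | hk1
    · rw [swap_self]; omega
    rcases eq_or_ne k (s + 1) with rfl | hk2
    · rw [swap_succ]; omega
    · rw [swap_other _ _ hk1 hk2]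
      have h := mult_extendMiddle_add c i k
      rw [← hs, if_neg (Ne.symm hk1), if_neg (Ne.symm hk2)] at h
      omega
  · rintro ⟨h1, h2⟩
    funext k
    have h := mult_extendMiddle_add c i k
    rw [← hs, h2] at h
    rcases eq_or_ne k s with rfl | hk1
    · rw [swap_self, if_pos rfl, if_neg (Ne.symm hss)] at h
      omega
    rcases eq_or_ne k (s + 1) with rfl | hk2
    · rw [swap_succ, if_neg hss, if_pos rfl] at h
      omega
    · rw [swap_other _ _ hk1 hk2, if_neg (Ne.symm hk1), if_neg (Ne.symm hk2)] at h
      omega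


lemma sum_extract_one {B a : ℕ} (f : ℕ → ℕ) (ha : a < B) :
    ∑ k ∈ range B, f k = f a + ∑ k ∈ (range B).erase a, f k :=
  (Finset.add_sum_erase _ f (Finset.mem_range.2 ha)).symm

lemma sum_extract_two {B a b : ℕ} (f : ℕ → ℕ) (hab : a ≠ b) (ha : a < B) (hb : b < B) :
    ∑ k ∈ range B, f k = f a + f b + ∑ k ∈ ((range B).erase a).erase b, f k := by
  rw [sum_extract_one f ha, ← Finset.add_sum_erase _ f
    (Finset.mem_erase.2 ⟨hab.symm, Finset.mem_range.2 hb⟩), add_assoc]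

lemma prod_extract_one {B a : ℕ} (f : ℕ → ℕ) (ha : a < B) :
    ∏ k ∈ range B, f k = f a * ∏ k ∈ (range B).erase a, f k :=
  (Finset.mul_prod_erase _ f (Finset.mem_range.2 ha)).symm

lemma prod_extract_two {B a b : ℕ} (f : ℕ → ℕ) (hab : a ≠ b) (ha : a < B) (hb : b < B) :
    ∏ k ∈ range B, f k = f a * f b * ∏ k ∈ ((range B).erase a).erase b, f k := by
  rw [prod_extract_one f ha, ← Finset.mul_prod_erase _ f
    (Finset.mem_erase.2 ⟨hab.symm, Finset.mem_range.2 hb⟩), mul_assoc]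

lemma dec1_other {m : ℕ → ℕ} {k : ℕ} (h : k ≠ 1) : dec1 m k = m k :=
  Function.update_of_ne h _ _

lemma D_dec1 {B : ℕ} {m : ℕ → ℕ} (h1 : 1 ≤ m 1) (hB : 1 < B) :
    D B m = m 1 * D B (dec1 m) := by
  obtain ⟨c, hc⟩ : ∃ c, m 1 = c + 1 := ⟨m 1 - 1, by omega⟩
  rw [D, D, prod_extract_one _ hB, prod_extract_one _ hB]
  have hrest : ∏ k ∈ (range B).erase 1, (dec1 m k).factorial * (k.factorial) ^ (dec1 m k)
      = ∏ k ∈ (range B).erase 1, (m k).factorial * (k.factorial) ^ (m k) :=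
    Finset.prod_congr rfl fun k hk => by rw [dec1_other (Finset.mem_erase.1 hk).1]
  rw [hrest]
  have hd : dec1 m 1 = c := by simp [dec1, hc]
  rw [hd, hc, Nat.factorial_succ c]
  simp [Nat.factorial_one]
  ring

lemma D_swap {B s : ℕ} {m : ℕ → ℕ} (hb : 1 ≤ m (s + 1)) (hsB : s + 1 < B) :
    (m s + 1) * D B m = (s + 1) * m (s + 1) * D B (swap s m) := by
  obtain ⟨b, hb'⟩ : ∃ b, m (s + 1) = b + 1 := ⟨m (s + 1) - 1, by omega⟩
  have hne : s ≠ s + 1 := by omega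
  rw [D, D, prod_extract_two _ hne (by omega) hsB, prod_extract_two _ hne (by omega) hsB]
  have hrest : ∏ k ∈ ((range B).erase s).erase (s + 1),
        ((swap s m) k).factorial * (k.factorial) ^ ((swap s m) k)
      = ∏ k ∈ ((range B).erase s).erase (s + 1), (m k).factorial * (k.factorial) ^ (m k) :=
    Finset.prod_congr rfl fun k hk => by
      rw [swap_other _ _ (Finset.mem_erase.1 (Finset.mem_erase.1 hk).2).1
        (Finset.mem_erase.1 hk).1]
  rw [hrest, swap_self, swap_succ, hb']
  simp only [Nat.add_sub_cancel]
  rw [Nat.factorial_succ (m s), Nat.factorial_succ b, Nat.factorial_succ s,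
    pow_succ (Nat.factorial s) (m s), pow_succ ((s + 1) * Nat.factorial s) b]
  ring


lemma sum_comp_partSize (c : OrderedFinpartition n) (F : ℕ → ℕ) :
    ∑ i, F (c.partSize i) = ∑ s ∈ range (n + 1), mult c s * F s := by
  classical
  rw [← Finset.sum_fiberwise_of_maps_to (s := Finset.univ) (g := c.partSize) (t := range (n+1))
    (fun i _ => by simp [Nat.lt_succ_iff, c.partSize_le i]) (f := fun i => F (c.partSize i))]
  refine Finset.sum_congr rfl fun k _ => ?_
  rw [Finset.sum_congr rfl (fun i hi => by rw [(Finset.mem_filter.1 hi).2]),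
    Finset.sum_const, smul_eq_mul, mult, mul_comm]

lemma N_rec (m : ℕ → ℕ) :
    N (n + 1) m = (if 1 ≤ m 1 then N n (dec1 m) else 0)
      + ∑ s ∈ range (n + 1), (if 1 ≤ m (s + 1) then (m s + 1) * N n (swap s m) else 0) := by
  classical
  have step1 : N (n + 1) m = ∑ c : OrderedFinpartition (n + 1), if mult c = m then 1 else 0 := by
    rw [N, Finset.card_filter]
  rw [step1, ← Fintype.sum_equiv (OrderedFinpartition.extendEquiv n)
      (fun p => if mult (p.1.extend p.2) = m then 1 else 0) _ (fun p => rfl)]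
  rw [← Finset.univ_sigma_univ, Finset.sum_sigma]
  have step2 : ∀ c : OrderedFinpartition n,
      (∑ o : Option (Fin c.length), if mult (c.extend o) = m then 1 else 0)
        = (if 1 ≤ m 1 ∧ mult c = dec1 m then 1 else 0)
          + ∑ s ∈ range (n + 1),
              mult c s * (if 1 ≤ m (s + 1) ∧ mult c = swap s m then 1 else 0) := by
    intro c
    rw [Fintype.sum_option]
    congr 1
    · exact if_congr (mult_extendLeft_iff c m) rfl rfl
    · rw [← sum_comp_partSize c (fun s => if 1 ≤ m (s + 1) ∧ mult c = swap s m then 1 else 0)]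
      exact Finset.sum_congr rfl fun i _ =>
        if_congr (mult_extendMiddle_iff c i m) rfl rfl
  rw [Finset.sum_congr rfl fun c _ => step2 c, Finset.sum_add_distrib]
  congr 1
  · by_cases h1 : 1 ≤ m 1
    · rw [if_pos h1, N, Finset.card_filter]
      refine Finset.sum_congr rfl fun c _ => ?_
      rw [if_congr ⟨fun h => h.2, fun h => ⟨h1, h⟩⟩ rfl rfl]
    · rw [if_neg h1]
      exact Finset.sum_eq_zero fun c _ => by rw [if_neg (fun h => h1 h.1)]
  · rw [Finset.sum_comm]
    refine Finset.sum_congr rfl fun s _ => ?_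
    by_cases hms : 1 ≤ m (s + 1)
    · rw [if_pos hms]
      have key : ∀ c : OrderedFinpartition n,
          mult c s * (if 1 ≤ m (s + 1) ∧ mult c = swap s m then 1 else 0)
            = if mult c = swap s m then (m s + 1) else 0 := by
        intro c
        by_cases hc : mult c = swap s m
        · rw [if_pos ⟨hms, hc⟩, if_pos hc, mul_one, hc, swap_self]
        · rw [if_neg (fun h => hc h.2), if_neg hc, mul_zero]
      rw [Finset.sum_congr rfl fun c _ => key c, ← Finset.sum_filter,
        Finset.sum_const, smul_eq_mul, mul_comm, N]
    · rw [if_neg hms]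
      exact Finset.sum_eq_zero fun c _ => by rw [if_neg (fun h => hms h.1), mul_zero]

lemma OK_single {m : ℕ → ℕ} (h : OK (n + 1) m) {a : ℕ} (ha : a < n + 2) :
    a * m a ≤ n + 1 := by
  have h22 := h.2.2
  rw [sum_extract_one (fun k => k * m k) ha] at h22
  omega

lemma OK_pair {m : ℕ → ℕ} (h : OK (n + 1) m) {a b : ℕ} (hab : a ≠ b) (ha : a < n + 2)
    (hb : b < n + 2) : a * m a + b * m b ≤ n + 1 := by
  have h22 := h.2.2
  rw [sum_extract_two (fun k => k * m k) hab ha hb] at h22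
  omega

lemma OK_dec1 {m : ℕ → ℕ} (h : OK (n + 1) m) (h1 : 1 ≤ m 1) : OK n (dec1 m) := by
  have hm1 : dec1 m 1 = m 1 - 1 := Function.update_self _ _ _
  have htop : dec1 m (n + 1) = 0 := by
    rcases eq_or_ne n 0 with rfl | hn
    · have h1' : m 1 ≤ 1 := by simpa using OK_single h (a := 1) (by omega)
      rw [show (0:ℕ) + 1 = 1 from rfl, hm1]
      omega
    · have hp := OK_pair h (a := 1) (b := n + 1) (by omega) (by omega) (by omega)
      have hz : m (n + 1) = 0 := by
        by_contra hz
        have : n + 1 ≤ (n + 1) * m (n + 1) :=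
          Nat.le_mul_of_pos_right _ (Nat.pos_of_ne_zero hz)
        omega
      rw [dec1_other (by omega)]
      exact hz
  refine ⟨by rw [dec1_other (by omega)]; exact h.1, fun k hk => ?_, ?_⟩
  · rcases eq_or_ne k (n + 1) with rfl | hk2
    · exact htop
    · rcases eq_or_ne k 1 with rfl | hk1
      · exact absurd (by omega : (1:ℕ) = n + 1) hk2
      · rw [dec1_other hk1]
        exact h.2.1 k (by omega)
  · rcases eq_or_ne n 0 with rfl | hn
    · simp
    · have h22 := h.2.2
      rw [Finset.sum_range_succ] at h22
      have e2 : ∑ k ∈ range (n + 1), k * m k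
          = 1 * m 1 + ∑ k ∈ (range (n + 1)).erase 1, k * m k :=
        sum_extract_one (a := 1) (B := n + 1) (fun k => k * m k) (by omega)
      have e3 : ∑ k ∈ range (n + 1), k * dec1 m k
          = 1 * dec1 m 1 + ∑ k ∈ (range (n + 1)).erase 1, k * dec1 m k :=
        sum_extract_one (a := 1) (B := n + 1) (fun k => k * dec1 m k) (by omega)
      have e4 : ∑ k ∈ (range (n + 1)).erase 1, k * dec1 m k
          = ∑ k ∈ (range (n + 1)).erase 1, k * m k :=
        Finset.sum_congr rfl fun k hk => by rw [dec1_other (Finset.mem_erase.1 hk).1]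
      have hz : (n + 1) * m (n + 1) = 0 := by
        have hp := OK_pair h (a := 1) (b := n + 1) (by omega) (by omega) (by omega)
        have hz : m (n + 1) = 0 := by
          by_contra hz
          have : n + 1 ≤ (n + 1) * m (n + 1) :=
            Nat.le_mul_of_pos_right _ (Nat.pos_of_ne_zero hz)
          omega
        rw [hz, mul_zero]
      omega

lemma OK_swap {m : ℕ → ℕ} (h : OK (n + 1) m) {s : ℕ} (hs1 : 1 ≤ s) (hsn : s ≤ n)
    (hms : 1 ≤ m (s + 1)) : OK n (swap s m) := by
  have hmtop : swap s m (n + 1) = 0 := by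
    rcases eq_or_ne s n with rfl | hsn'
    · rw [swap_succ]
      have hle := OK_single h (a := s + 1) (by omega)
      have hlt : m (s + 1) ≤ 1 := by
        by_contra hc
        have : (s + 1) * 2 ≤ (s + 1) * m (s + 1) := Nat.mul_le_mul_left _ (by omega)
        omega
      omega
    · rw [swap_other _ _ (by omega) (by omega)]
      have hp := OK_pair h (a := s + 1) (b := n + 1) (by omega) (by omega) (by omega)
      have hs1' : s + 1 ≤ (s + 1) * m (s + 1) := Nat.le_mul_of_pos_right _ (by omega)
      by_contra hz
      have : n + 1 ≤ (n + 1) * m (n + 1) :=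
        Nat.le_mul_of_pos_right _ (Nat.pos_of_ne_zero hz)
      omega
  refine ⟨by rw [swap_other _ _ (by omega) (by omega)]; exact h.1, fun k hk => ?_, ?_⟩
  · rcases eq_or_ne k (n + 1) with rfl | hk2
    · exact hmtop
    · rw [swap_other _ _ (by omega) (by omega)]
      exact h.2.1 k (by omega)
  · have h22 := h.2.2
    have e1 : ∑ k ∈ range (n + 2), k * m k
        = s * m s + (s + 1) * m (s + 1)
          + ∑ k ∈ ((range (n + 2)).erase s).erase (s + 1), k * m k :=
      sum_extract_two (fun k => k * m k) (by omega) (by omega) (by omega)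
    have e2 : ∑ k ∈ range (n + 2), k * swap s m k
        = s * swap s m s + (s + 1) * swap s m (s + 1)
          + ∑ k ∈ ((range (n + 2)).erase s).erase (s + 1), k * swap s m k :=
      sum_extract_two (fun k => k * swap s m k) (by omega) (by omega) (by omega)
    have e4 : ∑ k ∈ ((range (n + 2)).erase s).erase (s + 1), k * swap s m k
        = ∑ k ∈ ((range (n + 2)).erase s).erase (s + 1), k * m k :=
      Finset.sum_congr rfl fun k hk => by
        rw [swap_other _ _ (Finset.mem_erase.1 (Finset.mem_erase.1 hk).2).1
          (Finset.mem_erase.1 hk).1]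
    rw [swap_self, swap_succ, e4] at e2
    have e3 : ∑ k ∈ range (n + 2), k * swap s m k
        = ∑ k ∈ range (n + 1), k * swap s m k + (n + 1) * swap s m (n + 1) :=
      Finset.sum_range_succ _ _
    rw [hmtop, mul_zero, add_zero] at e3
    have exp1 : s * (m s + 1) = s * m s + s := by ring
    have exp2 : (s + 1) * (m (s + 1) - 1) + (s + 1) = (s + 1) * m (s + 1) := by
      obtain ⟨b, hb⟩ : ∃ b, m (s + 1) = b + 1 := ⟨m (s + 1) - 1, by omega⟩
      rw [hb, Nat.add_sub_cancel]
      ring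
    have h22' : ∑ k ∈ range (n + 2), k * m k = n + 1 := h22
    omega

lemma swap_supp {m : ℕ → ℕ} (h : OK n (swap s m)) : ∀ k, n + 1 ≤ k → swap s m k = 0 :=
  fun k hk => h.2.1 k (by omega)

open Classical in
theorem count : ∀ (n : ℕ) (m : ℕ → ℕ),
    N n m * D (n + 1) m = if OK n m then n.factorial else 0 := by
  intro n
  induction n with
  | zero =>
    intro m
    by_cases hOK : OK 0 m
    · rw [if_pos hOK]
      have hm : m = fun _ => 0 := by
        funext k
        rcases Nat.eq_zero_or_pos k with rfl | hk
        · exact hOK.1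
        · exact hOK.2.1 k hk
      have hN : N 0 m = 1 := by
        classical
        rw [N]
        have : ∀ c : OrderedFinpartition 0, mult c = m := by
          intro c
          funext k
          have hle := mult_le c k
          simp only [hm]
          omega
        rw [Finset.filter_true_of_mem fun c _ => this c, Finset.card_univ]
        simp [Fintype.card_unique]
      rw [hN, hm]
      simp [D]
    · rw [if_neg hOK, N_eq_zero hOK, zero_mul]
  | succ n IH =>
    intro m
    by_cases hOK : OK (n + 1) m
    · rw [if_pos hOK, N_rec, add_mul, Finset.sum_mul]
      have hsum : ∑ s ∈ range (n + 1), (s + 1) * m (s + 1) = n + 1 := by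
        have h22 := hOK.2.2
        rw [Finset.sum_range_succ'] at h22
        simpa using h22
      have claimA : (if 1 ≤ m 1 then N n (dec1 m) else 0) * D (n + 2) m
          = m 1 * n.factorial := by
        by_cases h1 : 1 ≤ m 1
        · rw [if_pos h1]
          have hOKd := OK_dec1 hOK h1
          calc N n (dec1 m) * D (n + 2) m
              = N n (dec1 m) * (m 1 * D (n + 2) (dec1 m)) := by
                rw [← D_dec1 h1 (by omega)]
            _ = m 1 * (N n (dec1 m) * D (n + 1) (dec1 m)) := by
                rw [D_stab (B := n + 1) (B' := n + 2)
                  (fun k hk => hOKd.2.1 k (by omega)) (by omega)]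
                ring
            _ = m 1 * n.factorial := by rw [IH, if_pos hOKd]
        · rw [if_neg h1, zero_mul]
          have : m 1 = 0 := by omega
          rw [this, zero_mul]
      have claimB : ∀ s ∈ range (n + 1),
          (if 1 ≤ m (s + 1) then (m s + 1) * N n (swap s m) else 0) * D (n + 2) m
            = if s = 0 then 0 else (s + 1) * m (s + 1) * n.factorial := by
        intro s hs
        have hs' : s < n + 1 := Finset.mem_range.1 hs
        by_cases hms : 1 ≤ m (s + 1)
        · rw [if_pos hms]
          rcases eq_or_ne s 0 with rfl | hs0
          · rw [if_pos rfl]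
            have : ¬ OK n (swap 0 m) := by
              intro hc
              have := hc.1
              rw [swap_self] at this
              omega
            rw [N_eq_zero this, mul_zero, zero_mul]
          · rw [if_neg hs0]
            have hOKs := OK_swap hOK (by omega) (by omega) hms
            calc (m s + 1) * N n (swap s m) * D (n + 2) m
                = N n (swap s m) * ((m s + 1) * D (n + 2) m) := by ring
              _ = N n (swap s m) * ((s + 1) * m (s + 1) * D (n + 2) (swap s m)) := by
                  rw [D_swap hms (by omega)]
              _ = (s + 1) * m (s + 1) * (N n (swap s m) * D (n + 1) (swap s m)) := by
                  rw [D_stab (B := n + 1) (B' := n + 2)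
                    (fun k hk => hOKs.2.1 k (by omega)) (by omega)]
                  ring
              _ = (s + 1) * m (s + 1) * n.factorial := by rw [IH, if_pos hOKs]
        · rw [if_neg hms, zero_mul]
          have : m (s + 1) = 0 := by omega
          rcases eq_or_ne s 0 with rfl | hs0
          · rw [if_pos rfl]
          · rw [if_neg hs0, this, mul_zero, zero_mul]
      rw [claimA, Finset.sum_congr rfl claimB]
      calc m 1 * n.factorial
            + ∑ s ∈ range (n + 1), (if s = 0 then 0 else (s + 1) * m (s + 1) * n.factorial)
          = ∑ s ∈ range (n + 1), ((if s = 0 then m 1 * n.factorial else 0)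
              + (if s = 0 then 0 else (s + 1) * m (s + 1) * n.factorial)) := by
            rw [Finset.sum_add_distrib]
            congr 1
            rw [Finset.sum_ite_eq' (range (n + 1)) 0 (fun _ => m 1 * n.factorial),
              if_pos (Finset.mem_range.2 (by omega))]
        _ = ∑ s ∈ range (n + 1), (s + 1) * m (s + 1) * n.factorial := by
            refine Finset.sum_congr rfl fun s _ => ?_
            rcases eq_or_ne s 0 with rfl | h
            · simp
            · simp [h]
        _ = (n + 1) * n.factorial := by rw [← Finset.sum_mul, hsum]
        _ = (n + 1).factorial := (Nat.factorial_succ n).symm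
    · rw [if_neg hOK, N_eq_zero hOK, zero_mul]


lemma prod_comp_partSize (c : OrderedFinpartition n) (G : ℕ → ℝ) :
    ∏ i, G (c.partSize i) = ∏ s ∈ range (n + 1), G s ^ (mult c s) := by
  classical
  rw [← Finset.prod_fiberwise_of_maps_to (s := Finset.univ) (g := c.partSize) (t := range (n+1))
    (fun i _ => by simp [Nat.lt_succ_iff, c.partSize_le i]) (f := fun i => G (c.partSize i))]
  refine Finset.prod_congr rfl fun k _ => ?_
  rw [Finset.prod_congr rfl (fun i hi => by rw [(Finset.mem_filter.1 hi).2]),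
    Finset.prod_const, mult]

lemma length_eq_sum_fin (c : OrderedFinpartition n) :
    c.length = ∑ j : Fin n, mult c (j.1 + 1) := by
  rw [← sum_mult c, Finset.sum_range_succ', mult_zero, add_zero,
    Fin.sum_univ_eq_sum_range (fun j => mult c (j + 1))]

lemma prod_fin (c : OrderedFinpartition n) (G : ℕ → ℝ) :
    ∏ i, G (c.partSize i) = ∏ j : Fin n, G (j.1 + 1) ^ (mult c (j.1 + 1)) := by
  rw [prod_comp_partSize c G, Finset.prod_range_succ', mult_zero, pow_zero, mul_one,
    Fin.prod_univ_eq_prod_range (fun j => G (j + 1) ^ (mult c (j + 1)))]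

lemma sum_k_mult_fin (c : OrderedFinpartition n) :
    ∑ j : Fin n, (j.1 + 1) * mult c (j.1 + 1) = n := by
  have h := sum_k_mult c
  rw [Finset.sum_range_succ'] at h
  simpa [Fin.sum_univ_eq_sum_range (fun j => (j + 1) * mult c (j + 1))] using h

/-- Extension of a length-`n` multiplicity vector to a function `ℕ → ℕ`. -/
def extm (n : ℕ) (m : Fin n → ℕ) : ℕ → ℕ :=
  fun k => if h : k - 1 < n ∧ 1 ≤ k then m ⟨k - 1, h.1⟩ else 0

lemma extm_zero (m : Fin n → ℕ) : extm n m 0 = 0 := by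
  rw [extm, dif_neg]
  omega

lemma extm_succ (m : Fin n → ℕ) (j : Fin n) : extm n m (j.1 + 1) = m j := by
  have h : (j.1 + 1) - 1 < n ∧ 1 ≤ j.1 + 1 := ⟨by simpa using j.2, by omega⟩
  have e : (⟨(j.1 + 1) - 1, h.1⟩ : Fin n) = j := Fin.ext (by show j.1 + 1 - 1 = j.1; omega)
  rw [extm, dif_pos h, e]

lemma extm_gt (m : Fin n → ℕ) {k : ℕ} (hk : n < k) : extm n m k = 0 := by
  rw [extm, dif_neg]
  omega

lemma mult_eq_extm_iff (c : OrderedFinpartition n) (m : Fin n → ℕ) :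
    (fun j : Fin n => mult c (j.1 + 1)) = m ↔ mult c = extm n m := by
  constructor
  · intro h
    funext k
    by_cases hk : k - 1 < n ∧ 1 ≤ k
    · have e : (⟨k - 1, hk.1⟩ : Fin n).1 + 1 = k := by
        show k - 1 + 1 = k
        omega
      rw [extm, dif_pos hk, ← congrFun h ⟨k - 1, hk.1⟩, e]
    · rw [extm, dif_neg hk]
      rcases Nat.eq_zero_or_pos k with rfl | hpos
      · exact mult_zero c
      · exact mult_of_gt c (by omega)
  · intro h
    funext j
    rw [congrFun h (j.1 + 1), extm_succ]

lemma D_extm (m : Fin n → ℕ) :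
    D (n + 1) (extm n m) = ∏ j : Fin n, ((m j).factorial * ((j.1 + 1).factorial) ^ (m j)) := by
  rw [D, Finset.prod_range_succ', extm_zero]
  simp only [Nat.factorial_zero, pow_zero, mul_one, one_mul]
  rw [← Fin.prod_univ_eq_prod_range
    (fun k => (extm n m (k + 1)).factorial * ((k + 1).factorial) ^ (extm n m (k + 1)))]
  exact Finset.prod_congr rfl fun j _ => by rw [extm_succ]

lemma OK_extm (m : Fin n → ℕ) (hsum : ∑ j : Fin n, (j.1 + 1) * m j = n) :
    OK n (extm n m) := by
  refine ⟨extm_zero m, fun k hk => extm_gt m hk, ?_⟩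
  rw [Finset.sum_range_succ', zero_mul, add_zero,
    ← Fin.sum_univ_eq_sum_range (fun k => (k + 1) * extm n m (k + 1))]
  exact Eq.trans (Finset.sum_congr rfl fun j _ => by rw [extm_succ]) hsum

end FaaAux



open OrderedFinpartition Finset in
lemma L1 (f g : ℝ → ℝ) (hf : ContDiff ℝ (⊤ : ℕ∞) f) (hg : ContDiff ℝ (⊤ : ℕ∞) g) (n : ℕ) (x : ℝ) :
    iteratedDeriv n (f ∘ g) x = ∑ c : OrderedFinpartition n,
      iteratedDeriv c.length f (g x) * ∏ i, iteratedDeriv (c.partSize i) g x := by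
  have hf2 : ContDiff ℝ (⊤ : ℕ∞) f := hf.of_le (by simp)
  have hg2 : ContDiff ℝ (⊤ : ℕ∞) g := hg.of_le (by simp)
  have hf' : HasFTaylorSeriesUpTo (⊤ : ℕ∞) f (ftaylorSeries ℝ f) := contDiff_iff_ftaylorSeries.1 hf2
  have hg' : HasFTaylorSeriesUpTo (⊤ : ℕ∞) g (ftaylorSeries ℝ g) := contDiff_iff_ftaylorSeries.1 hg2
  rw [← hasFTaylorSeriesUpToOn_univ_iff] at hf' hg'
  have hcomp := hf'.comp hg' (Set.mapsTo_univ _ _)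
  rw [hasFTaylorSeriesUpToOn_univ_iff] at hcomp
  have := hcomp.eq_iteratedFDeriv (m := n) (by exact_mod_cast le_top) x
  rw [iteratedDeriv, ← this]
  show (∑ c : OrderedFinpartition n, (ftaylorSeries ℝ f (g x)).compAlongOrderedFinpartition
      (ftaylorSeries ℝ g x) c) (fun _ => 1) = _
  rw [ContinuousMultilinearMap.sum_apply]
  refine Finset.sum_congr rfl fun c _ => ?_
  rw [FormalMultilinearSeries.compAlongOrderedFinpartition_apply]
  have : c.applyOrderedFinpartition (fun m => (ftaylorSeries ℝ g x (c.partSize m)))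
      (fun _ => 1) = fun m => (iteratedDeriv (c.partSize m) g x : ℝ) := by
    ext m
    simp only [applyOrderedFinpartition_apply, iteratedDeriv, ftaylorSeries]
    rfl
  rw [this]
  have : (fun m : Fin c.length => (iteratedDeriv (c.partSize m) g x : ℝ)) =
      fun m => (iteratedDeriv (c.partSize m) g x) • (1 : ℝ) := by ext m; simp
  rw [this, ContinuousMultilinearMap.map_smul_univ]
  simp [iteratedDeriv, ftaylorSeries, mul_comm]

/-- Faà di Bruno's formula: for smooth `f, g : ℝ → ℝ` and `n ≥ 1`,
the `n`-th derivative of `f ∘ g` at `x` is the sum over tuples `(m₁,…,m_n)` of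
non-negative integers with `∑ j·m_j = n` of
`n!/(∏ m_j!·(j!)^{m_j}) · f^{(∑ m_j)}(g x) · ∏ (g^{(j)}(x))^{m_j}`. -/
theorem faa_di_bruno_formula (f g : ℝ → ℝ) (hf : ContDiff ℝ (⊤ : ℕ∞) f) (hg : ContDiff ℝ (⊤ : ℕ∞) g)
    (n : ℕ) (hn : 1 ≤ n) (x : ℝ) :
    iteratedDeriv n (f ∘ g) x =
      ∑ m ∈ (Fintype.piFinset fun _ : Fin n => Finset.range (n + 1)).filter
          (fun m => ∑ j : Fin n, (j.1 + 1) * m j = n),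
        ((n.factorial : ℝ) /
            ((∏ j : Fin n, ((m j).factorial * ((j.1 + 1).factorial) ^ (m j)) : ℕ) : ℝ)) *
          iteratedDeriv (∑ j : Fin n, m j) f (g x) *
          ∏ j : Fin n, (iteratedDeriv (j.1 + 1) g x) ^ (m j) := by
  classical
  rw [L1 f g hf hg n x]
  have hmaps : ∀ c : OrderedFinpartition n, c ∈ (Finset.univ : Finset (OrderedFinpartition n)) →
      (fun j : Fin n => FaaAux.mult c (j.1 + 1)) ∈
        (Fintype.piFinset fun _ : Fin n => Finset.range (n + 1)).filter
          (fun m => ∑ j : Fin n, (j.1 + 1) * m j = n) := by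
    intro c _
    rw [Finset.mem_filter]
    constructor
    · rw [Fintype.mem_piFinset]
      intro j
      rw [Finset.mem_range]
      exact Nat.lt_succ_of_le (FaaAux.mult_le c _)
    · exact FaaAux.sum_k_mult_fin c
  rw [← Finset.sum_fiberwise_of_maps_to hmaps
    (fun c => iteratedDeriv c.length f (g x) * ∏ i, iteratedDeriv (c.partSize i) g x)]
  refine Finset.sum_congr rfl fun m hm => ?_
  have hsum : ∑ j : Fin n, (j.1 + 1) * m j = n := (Finset.mem_filter.1 hm).2
  have hOK := FaaAux.OK_extm m hsum
  have hcount := FaaAux.count n (FaaAux.extm n m)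
  rw [if_pos hOK] at hcount
  have hterm : ∀ c ∈ Finset.univ.filter
      (fun c : OrderedFinpartition n => (fun j : Fin n => FaaAux.mult c (j.1 + 1)) = m),
      iteratedDeriv c.length f (g x) * ∏ i, iteratedDeriv (c.partSize i) g x
        = iteratedDeriv (∑ j : Fin n, m j) f (g x) *
            ∏ j : Fin n, (iteratedDeriv (j.1 + 1) g x) ^ (m j) := by
    intro c hc
    have hc' : (fun j : Fin n => FaaAux.mult c (j.1 + 1)) = m := (Finset.mem_filter.1 hc).2
    have hlen : c.length = ∑ j : Fin n, m j := by
      rw [FaaAux.length_eq_sum_fin c]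
      exact Finset.sum_congr rfl fun j _ => congrFun hc' j
    have hprod : ∏ i, iteratedDeriv (c.partSize i) g x
        = ∏ j : Fin n, (iteratedDeriv (j.1 + 1) g x) ^ (m j) := by
      rw [FaaAux.prod_fin c (fun k => iteratedDeriv k g x)]
      exact Finset.prod_congr rfl fun j _ => by rw [congrFun hc' j]
    rw [hprod, hlen]
  rw [Finset.sum_congr rfl hterm, Finset.sum_const]
  have hcard : (Finset.univ.filter
      (fun c : OrderedFinpartition n => (fun j : Fin n => FaaAux.mult c (j.1 + 1)) = m)).card
        = FaaAux.N n (FaaAux.extm n m) := by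
    rw [FaaAux.N]
    congr 1
    exact Finset.filter_congr fun c _ => FaaAux.mult_eq_extm_iff c m
  rw [hcard, nsmul_eq_mul]
  have hDpos : (0 : ℝ) < (FaaAux.D (n + 1) (FaaAux.extm n m) : ℝ) := by
    exact_mod_cast FaaAux.D_pos (n + 1) (FaaAux.extm n m)
  have hcount' : (FaaAux.N n (FaaAux.extm n m) : ℝ) * (FaaAux.D (n + 1) (FaaAux.extm n m) : ℝ) = (n.factorial : ℝ) := by
    exact_mod_cast congrArg (Nat.cast : ℕ → ℝ) hcount
  have hNval : (FaaAux.N n (FaaAux.extm n m) : ℝ)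
      = (n.factorial : ℝ) / ((FaaAux.D (n + 1) (FaaAux.extm n m) : ℕ) : ℝ) := by
    field_simp
    linarith [hcount']
  rw [hNval, FaaAux.D_extm m]
  ring
end
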